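/- Pushout property of the node polytope: let P ⊆ ℝⁿ be convex, let ρ : P → [0,∞) be affine, let E = {(p,a,b) ∈ P × [0,∞)² : a+b = ρ(p)}, and let F₀ = {(p,0,ρ(p))}, F₁ = {(p,ρ(p),0)} be the two faces of E mapping isomorphically to P. Then any pair of affine maps g₀, g₁ : P → ℝᵐ satisfying the compatibility condition g₀ = g₁ on {p : ρ(p) = 0} extends to at most one affine map G : E → ℝᵐ with G(p,0,ρ(p)) = g₀(p) and G(p,ρ(p),0) = g₁(p), provided ρ is not identically zero on the affine hull of P; moreover if such G exists it is unique because F₀ ∪ F₁ affinely spans E. -/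

import Mathlib

/-!
Every point `(p, a, b)` of the node polytope lies on the segment joining `(p, 0, ρ p) ∈ F₀` to
`(p, ρ p, 0) ∈ F₁`, so the polytope sits between `F₀ ∪ F₁` and its convex hull. Hence both have
the same affine span, and affine maps agreeing on `F₀ ∪ F₁` agree on the whole polytope.
-/

section NodePolytope

variable {V : Type*}

def nodePolytope (P : Set V) (ρ : V → ℝ) : Set (V × ℝ × ℝ) :=
  {z | z.1 ∈ P ∧ 0 ≤ z.2.1 ∧ 0 ≤ z.2.2 ∧ z.2.1 + z.2.2 = ρ z.1}

def nodeFaces (P : Set V) (ρ : V → ℝ) : Set (V × ℝ × ℝ) :=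
  (fun p => (p, 0, ρ p)) '' P ∪ (fun p => (p, ρ p, 0)) '' P

theorem nodeFaces_subset_nodePolytope {P : Set V} {ρ : V → ℝ} (hρ : ∀ p ∈ P, 0 ≤ ρ p) :
    nodeFaces P ρ ⊆ nodePolytope P ρ := by
  rintro _ (⟨p, hp, rfl⟩ | ⟨p, hp, rfl⟩)
  · exact ⟨hp, le_rfl, hρ p hp, zero_add _⟩
  · exact ⟨hp, hρ p hp, le_rfl, add_zero _⟩

variable [AddCommGroup V] [Module ℝ V]

theorem mem_segment_zero_add_add_zero (p : V) {a b : ℝ} (ha : 0 ≤ a) (hb : 0 ≤ b) :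
    (p, a, b) ∈ segment ℝ (p, 0, a + b) (p, a + b, 0) := by
  rcases (add_nonneg ha hb).eq_or_lt with hab | hab
  · obtain ⟨rfl, rfl⟩ : a = 0 ∧ b = 0 := ⟨by linarith, by linarith⟩
    rw [zero_add]
    exact left_mem_segment ℝ _ _
  · have hsum : b / (a + b) + a / (a + b) = 1 := by
      rw [← add_div, add_comm, div_self hab.ne']
    refine ⟨b / (a + b), a / (a + b), by positivity, by positivity, hsum, ?_⟩
    ext <;> simp only [Prod.fst_add, Prod.snd_add, Prod.smul_fst, Prod.smul_snd, smul_eq_mul]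
    · rw [← add_smul, hsum, one_smul]
    all_goals field_simp; ring

variable {P : Set V} {ρ : V → ℝ}

theorem nodePolytope_subset_convexHull_nodeFaces :
    nodePolytope P ρ ⊆ convexHull ℝ (nodeFaces P ρ) := by
  rintro ⟨p, a, b⟩ ⟨hp, ha, hb, hab⟩
  dsimp only at hp ha hb hab
  refine segment_subset_convexHull (s := nodeFaces P ρ)
    (Or.inl ⟨p, hp, rfl⟩) (Or.inr ⟨p, hp, rfl⟩) ?_
  simpa only [hab] using mem_segment_zero_add_add_zero p ha hb

theorem affineSpan_nodeFaces (hρ : ∀ p ∈ P, 0 ≤ ρ p) :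
    affineSpan ℝ (nodeFaces P ρ) = affineSpan ℝ (nodePolytope P ρ) :=
  le_antisymm (affineSpan_mono ℝ (nodeFaces_subset_nodePolytope hρ)) <| by
    simpa only [affineSpan_convexHull] using
      affineSpan_mono ℝ (nodePolytope_subset_convexHull_nodeFaces (P := P) (ρ := ρ))

theorem AffineMap.eqOn_nodePolytope {W : Type*} [AddCommGroup W] [Module ℝ W]
    {G G' : V × ℝ × ℝ →ᵃ[ℝ] W} (h : Set.EqOn G G' (nodeFaces P ρ)) :
    Set.EqOn G G' (nodePolytope P ρ) :=
  (AffineMap.eqOn_affineSpan h).mono <|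
    nodePolytope_subset_convexHull_nodeFaces.trans (convexHull_subset_affineSpan _)

end NodePolytope

theorem node_polytope_pushout_general {n m : ℕ}
    (P : Set (Fin n → ℝ))
    (ρ : (Fin n → ℝ) →ᵃ[ℝ] ℝ) (hρ : ∀ p ∈ P, 0 ≤ ρ p) :
    (affineSpan ℝ ((fun p => (p, (0 : ℝ), ρ p)) '' P ∪ (fun p => (p, ρ p, (0 : ℝ))) '' P) =
      affineSpan ℝ
        {z : (Fin n → ℝ) × ℝ × ℝ | z.1 ∈ P ∧ 0 ≤ z.2.1 ∧ 0 ≤ z.2.2 ∧ z.2.1 + z.2.2 = ρ z.1}) ∧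
    ∀ (g₀ g₁ : (Fin n → ℝ) →ᵃ[ℝ] (Fin m → ℝ)),
      (∀ p ∈ P, ρ p = 0 → g₀ p = g₁ p) →
      ∀ (G G' : ((Fin n → ℝ) × ℝ × ℝ) →ᵃ[ℝ] (Fin m → ℝ)),
        (∀ p ∈ P, G (p, 0, ρ p) = g₀ p ∧ G (p, ρ p, 0) = g₁ p) →
        (∀ p ∈ P, G' (p, 0, ρ p) = g₀ p ∧ G' (p, ρ p, 0) = g₁ p) →
        Set.EqOn G G'
          {z : (Fin n → ℝ) × ℝ × ℝ | z.1 ∈ P ∧ 0 ≤ z.2.1 ∧ 0 ≤ z.2.2 ∧ z.2.1 + z.2.2 = ρ z.1} := by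
  refine ⟨affineSpan_nodeFaces (ρ := ρ) hρ, fun g₀ g₁ _ G G' hG hG' => ?_⟩
  refine AffineMap.eqOn_nodePolytope (ρ := ρ) ?_
  rintro _ (⟨p, hp, rfl⟩ | ⟨p, hp, rfl⟩)
  · exact (hG p hp).1.trans (hG' p hp).1.symm
  · exact (hG p hp).2.trans (hG' p hp).2.symm

/-- Pushout property of the node polytope
`E = {(p,a,b) : p ∈ P, a,b ≥ 0, a+b = ρ(p)}`: the two faces
`F₀ = {(p,0,ρ p)}` and `F₁ = {(p,ρ p,0)}` affinely span `E`, so an affine map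
on `E` is determined by its restrictions to `F₀` and `F₁`; in particular, given
`g₀, g₁ : P → ℝᵐ` agreeing on `{ρ = 0}`, there is at most one affine
`G : E → ℝᵐ` with `G(p,0,ρ p) = g₀ p` and `G(p,ρ p,0) = g₁ p`. -/
theorem node_polytope_pushout {n m : ℕ}
    (P : Set (Fin n → ℝ)) (hP : Convex ℝ P)
    (ρ : (Fin n → ℝ) →ᵃ[ℝ] ℝ) (hρ : ∀ p ∈ P, 0 ≤ ρ p)
    (hnz : ∃ x ∈ (affineSpan ℝ P : Set (Fin n → ℝ)), ρ x ≠ 0) :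
    (affineSpan ℝ ((fun p => (p, (0 : ℝ), ρ p)) '' P ∪ (fun p => (p, ρ p, (0 : ℝ))) '' P) =
      affineSpan ℝ
        {z : (Fin n → ℝ) × ℝ × ℝ | z.1 ∈ P ∧ 0 ≤ z.2.1 ∧ 0 ≤ z.2.2 ∧ z.2.1 + z.2.2 = ρ z.1}) ∧
    ∀ (g₀ g₁ : (Fin n → ℝ) →ᵃ[ℝ] (Fin m → ℝ)),
      (∀ p ∈ P, ρ p = 0 → g₀ p = g₁ p) →
      ∀ (G G' : ((Fin n → ℝ) × ℝ × ℝ) →ᵃ[ℝ] (Fin m → ℝ)),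
        (∀ p ∈ P, G (p, 0, ρ p) = g₀ p ∧ G (p, ρ p, 0) = g₁ p) →
        (∀ p ∈ P, G' (p, 0, ρ p) = g₀ p ∧ G' (p, ρ p, 0) = g₁ p) →
        Set.EqOn G G'
          {z : (Fin n → ℝ) × ℝ × ℝ | z.1 ∈ P ∧ 0 ≤ z.2.1 ∧ 0 ≤ z.2.2 ∧ z.2.1 + z.2.2 = ρ z.1} :=
  node_polytope_pushout_general P ρ hρ
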